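/- Let Γ be the graph with five vertexes: a 4-cycle a — b — a' — b' — a with f(a) = f(a') = 9, f(b) = f(b') = 1, plus a central vertex c with f(c) = 2 adjacent to all of a, b, a', b'; all eight edge weights equal 1. Call a 2-partition of type D if one district is {c, x} with x ∈ {a, a'} (cut energy 5, deviation energy 0), of type M if one district is a weight-9 vertex together with one adjacent weight-1 vertex (cut energy 4, deviation energy √2), and of type C if one district is a single weight-9 vertex (cut energy 3, deviation energy 2√2). Then: for every λ ∈ [0, 2−√2) the minimal 2-partitions of F_λ are exactly those of type D; at λ = 2−√2 the partitions of types D, M and C all minimize F_λ; and for every λ ∈ (2−√2, 1) the minimal 2-partitions are exactly those of type C. -/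

import Mathlib

/-! A 2-partition is determined by its first district `S`, the second one being `Sᶜ`, and with unit
edge weights its energy is `λ · cut(S) + (1 - λ) · √2 · |m(S) - 11|`. Running through the subsets `S`
with `S` and `Sᶜ` both connected, the types `D`, `M`, `C` have `(cut, |m - 11|) = (5, 0), (4, 1),
(3, 2)`, and every other partition has `cut ≥ 3` and `|m - 11| ≥ 8`. With
`d = √2 (1 - λ) - λ = (1 + √2)(2 - √2 - λ)`, types `M` and `C` cost `d` and `2d` more than type `D`,
and all other partitions cost at least `6 √2 (1 - λ)` more than type `C`, so the sign of `d` decides. -/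

open Finset

namespace Districting

variable {V : Type*} [Fintype V] [DecidableEq V]

/-- An `N`-partition of a graph `G`: a family of `N` pairwise disjoint sets of
vertexes covering all of `V`, each inducing a connected subgraph of `G`. -/
structure Partition (G : SimpleGraph V) (N : ℕ) where
  part : Fin N → Finset V
  disj : ∀ k l, k ≠ l → Disjoint (part k) (part l)
  covers : ∀ v : V, ∃ k, v ∈ part k
  connected : ∀ k, (G.induce (part k : Set V)).Connected

/-- The mass of a set of vertexes w.r.t. the vertex weight `f`. -/
def mass (f : V → ℝ) (s : Finset V) : ℝ := ∑ v ∈ s, f v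

/-- The total mass of the graph w.r.t. the vertex weight `f`. -/
def totalMass (f : V → ℝ) : ℝ := ∑ v : V, f v

open Classical in
/-- The cut (perimeter) energy of a partition: the sum of the weights of edges
whose endpoints lie in different parts. -/
noncomputable def cutEnergy (G : SimpleGraph V) (g : Sym2 V → ℝ) {N : ℕ}
    (P : Partition G N) : ℝ :=
  ∑ e : Sym2 V,
    if e ∈ G.edgeSet ∧ ∀ k, ¬ (∀ v ∈ e, v ∈ P.part k) then g e else 0

/-- The deviation energy of a partition: the standard deviation of the masses
from the mean mass. -/
noncomputable def deviation {G : SimpleGraph V} (f : V → ℝ) {N : ℕ}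
    (P : Partition G N) : ℝ :=
  Real.sqrt (∑ k : Fin N, (mass f (P.part k) - totalMass f / (N : ℝ)) ^ 2)

/-- The energy functional `F_λ`. -/
noncomputable def energy (G : SimpleGraph V) (f : V → ℝ) (g : Sym2 V → ℝ)
    (lam : ℝ) {N : ℕ} (P : Partition G N) : ℝ :=
  lam * cutEnergy G g P + (1 - lam) * deviation f P

end Districting

namespace Districting

/-- The 4-cycle `a — b — a' — b' — a` (`a = 0`, `b = 1`, `a' = 2`, `b' = 3`)
together with a central vertex `c = 4` adjacent to all four cycle vertexes. -/
def wheelGraph5 : SimpleGraph (Fin 5) :=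
  SimpleGraph.fromRel (fun u v =>
    ((u, v) = (0, 1) ∨ (u, v) = (1, 2) ∨ (u, v) = (2, 3) ∨ (u, v) = (3, 0)) ∨
      (u = 4 ∧ (v = 0 ∨ v = 1 ∨ v = 2 ∨ v = 3)))

/-- Type `D`: one district is the central vertex together with a weight-9 vertex. -/
def typeD (P : Partition wheelGraph5 2) : Prop :=
  ∃ k, P.part k = ({4, 0} : Finset (Fin 5)) ∨ P.part k = ({4, 2} : Finset (Fin 5))

/-- Type `M`: one district is a weight-9 vertex with one adjacent weight-1 vertex. -/
def typeM (P : Partition wheelGraph5 2) : Prop :=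
  ∃ k, P.part k = ({0, 1} : Finset (Fin 5)) ∨ P.part k = ({0, 3} : Finset (Fin 5)) ∨
    P.part k = ({2, 1} : Finset (Fin 5)) ∨ P.part k = ({2, 3} : Finset (Fin 5))

/-- Type `C`: one district is a single weight-9 vertex. -/
def typeC (P : Partition wheelGraph5 2) : Prop :=
  ∃ k, P.part k = ({0} : Finset (Fin 5)) ∨ P.part k = ({2} : Finset (Fin 5))

lemma forall_le_iff_of_eq_of_lt {α β : Type*} [LinearOrder β] {E : α → β} {T : α → Prop} {e : β}
    (hex : ∃ a, T a) (hT : ∀ a, T a → E a = e) (hlt : ∀ a, ¬ T a → e < E a) (a : α) :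
    (∀ b, E a ≤ E b) ↔ T a := by
  obtain ⟨a₀, ha₀⟩ := hex
  refine ⟨fun hmin => by_contra fun ha => (hmin a₀).not_gt (hT a₀ ha₀ ▸ hlt a ha), fun ha b => ?_⟩
  rw [hT a ha]
  by_cases hb : T b
  exacts [(hT b hb).ge, (hlt b hb).le]

lemma sqrt_two_mul_one_sub_sub_eq (lam : ℝ) :
    √2 * (1 - lam) - lam = (1 + √2) * (2 - √2 - lam) := by
  linear_combination Real.sq_sqrt (zero_le_two : (0 : ℝ) ≤ 2)

namespace Partition

variable {V : Type*} {G : SimpleGraph V}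

lemma part_nonempty {N : ℕ} (P : Partition G N) (k : Fin N) : (P.part k).Nonempty :=
  let ⟨⟨v, hv⟩⟩ := (P.connected k).nonempty
  ⟨v, hv⟩

variable [Fintype V] [DecidableEq V]

lemma part_one_eq_compl (P : Partition G 2) : P.part 1 = (P.part 0)ᶜ := by
  ext v
  rw [mem_compl]
  refine ⟨fun h1 h0 => disjoint_left.mp (P.disj 0 1 (by decide)) h0 h1, fun h0 => ?_⟩
  obtain ⟨k, hk⟩ := P.covers v
  fin_cases k
  exacts [absurd hk h0, hk]

def ofCompl (S : Finset V) (hS : (G.induce (S : Set V)).Connected)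
    (hSc : (G.induce (↑Sᶜ : Set V)).Connected) : Partition G 2 where
  part := ![S, Sᶜ]
  disj k l hkl := by
    fin_cases k <;> fin_cases l
    all_goals first | exact absurd rfl hkl | exact disjoint_compl_right | exact disjoint_compl_left
  covers v := by
    by_cases hv : v ∈ S
    exacts [⟨0, hv⟩, ⟨1, mem_compl.mpr hv⟩]
  connected k := by
    fin_cases k
    exacts [hS, hSc]

end Partition

section TwoPartitions

variable {V : Type*} [Fintype V] [DecidableEq V] {G : SimpleGraph V}

def cutSize (G : SimpleGraph V) [DecidableRel G.Adj] (S : Finset V) : ℕ :=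
  #{e ∈ G.edgeFinset | ¬ (∀ v ∈ e, v ∈ S) ∧ ¬ (∀ v ∈ e, v ∉ S)}

lemma cutEnergy_eq_cutSize [DecidableRel G.Adj] {g : Sym2 V → ℝ}
    (hg : ∀ e ∈ G.edgeSet, g e = 1) (P : Partition G 2) :
    cutEnergy G g P = cutSize G (P.part 0) := by
  simp only [cutEnergy, cutSize, Fin.forall_fin_two, P.part_one_eq_compl, mem_compl,
    card_filter, Nat.cast_sum, Nat.cast_ite, Nat.cast_one, Nat.cast_zero]
  rw [← sum_filter, ← sum_filter]
  refine sum_congr ?_ fun e he => hg e (SimpleGraph.mem_edgeFinset.mp (mem_filter.mp he).1)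
  ext e
  simp only [mem_filter, mem_univ, true_and, SimpleGraph.mem_edgeFinset]

lemma deviation_eq_sqrt_two_mul_abs (f : V → ℝ) (P : Partition G 2) :
    deviation f P = √2 * |mass f (P.part 0) - totalMass f / 2| := by
  have hcompl : mass f (P.part 0)ᶜ = totalMass f - mass f (P.part 0) := by
    rw [mass, mass, totalMass, ← sum_compl_add_sum (P.part 0)]
    ring
  rw [deviation, Fin.sum_univ_two, P.part_one_eq_compl, hcompl, Nat.cast_ofNat,
    ← Real.sqrt_sq_eq_abs, ← Real.sqrt_mul zero_le_two]
  congr 1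
  ring

end TwoPartitions

instance : DecidableRel wheelGraph5.Adj := fun u v =>
  decidable_of_iff _ (SimpleGraph.fromRel_adj _ u v).symm

def wheelWeight : Fin 5 → ℤ := ![9, 1, 9, 1, 2]

abbrev wheelMass (v : Fin 5) : ℝ := wheelWeight v

def imbalance (S : Finset (Fin 5)) : ℤ := |∑ v ∈ S, wheelWeight v - 11|

set_option synthInstance.maxSize 1024 in
lemma cutSize_imbalance_of_type (P : Partition wheelGraph5 2) :
    (typeD P → cutSize wheelGraph5 (P.part 0) = 5 ∧ imbalance (P.part 0) = 0) ∧
    (typeM P → cutSize wheelGraph5 (P.part 0) = 4 ∧ imbalance (P.part 0) = 1) ∧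
    (typeC P → cutSize wheelGraph5 (P.part 0) = 3 ∧ imbalance (P.part 0) = 2) ∧
    (¬ typeD P → ¬ typeM P → ¬ typeC P →
      3 ≤ cutSize wheelGraph5 (P.part 0) ∧ 8 ≤ imbalance (P.part 0)) := by
  have hS := (P.connected 0).preconnected
  have hSc := (P.connected 1).preconnected
  have hne := P.part_nonempty 0
  have hcne := P.part_nonempty 1
  rw [P.part_one_eq_compl] at hSc hcne
  simp only [typeD, typeM, typeC, Fin.exists_fin_two, P.part_one_eq_compl]
  generalize P.part 0 = S at hS hSc hne hcne ⊢
  revert S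
  decide

lemma energy_wheel_eq {g : Sym2 (Fin 5) → ℝ} (hg : ∀ e ∈ wheelGraph5.edgeSet, g e = 1)
    (lam : ℝ) (P : Partition wheelGraph5 2) :
    energy wheelGraph5 wheelMass g lam P =
      lam * cutSize wheelGraph5 (P.part 0) + (1 - lam) * (√2 * imbalance (P.part 0)) := by
  have htotal : totalMass wheelMass = 22 := by
    rw [totalMass]
    exact_mod_cast (by decide : ∑ v, wheelWeight v = 22)
  rw [energy, cutEnergy_eq_cutSize hg, deviation_eq_sqrt_two_mul_abs, htotal, imbalance]
  push_cast [mass]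
  norm_num

section WheelEnergies

variable {g : Sym2 (Fin 5) → ℝ} {lam : ℝ} {P : Partition wheelGraph5 2}

lemma energy_of_typeD (hg : ∀ e ∈ wheelGraph5.edgeSet, g e = 1) (h : typeD P) :
    energy wheelGraph5 wheelMass g lam P = 5 * lam := by
  obtain ⟨hc, hi⟩ := (cutSize_imbalance_of_type P).1 h
  rw [energy_wheel_eq hg, hc, hi]
  push_cast
  ring

lemma energy_of_typeM (hg : ∀ e ∈ wheelGraph5.edgeSet, g e = 1) (h : typeM P) :
    energy wheelGraph5 wheelMass g lam P = 4 * lam + √2 * (1 - lam) := by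
  obtain ⟨hc, hi⟩ := (cutSize_imbalance_of_type P).2.1 h
  rw [energy_wheel_eq hg, hc, hi]
  push_cast
  ring

lemma energy_of_typeC (hg : ∀ e ∈ wheelGraph5.edgeSet, g e = 1) (h : typeC P) :
    energy wheelGraph5 wheelMass g lam P = 3 * lam + 2 * (√2 * (1 - lam)) := by
  obtain ⟨hc, hi⟩ := (cutSize_imbalance_of_type P).2.2.1 h
  rw [energy_wheel_eq hg, hc, hi]
  push_cast
  ring

lemma le_energy_of_not_type (hg : ∀ e ∈ wheelGraph5.edgeSet, g e = 1) (h0 : 0 ≤ lam)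
    (h1 : lam ≤ 1) (hD : ¬ typeD P) (hM : ¬ typeM P) (hC : ¬ typeC P) :
    3 * lam + 8 * (√2 * (1 - lam)) ≤ energy wheelGraph5 wheelMass g lam P := by
  obtain ⟨hc, hi⟩ := (cutSize_imbalance_of_type P).2.2.2 hD hM hC
  have hc' : (3 : ℝ) ≤ cutSize wheelGraph5 (P.part 0) := by exact_mod_cast hc
  have hi' : (8 : ℝ) ≤ imbalance (P.part 0) := by exact_mod_cast hi
  have h1' : 0 ≤ 1 - lam := by linarith
  calc 3 * lam + 8 * (√2 * (1 - lam)) = lam * 3 + (1 - lam) * (√2 * 8) := by ring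
    _ ≤ energy wheelGraph5 wheelMass g lam P := by
      rw [energy_wheel_eq hg]
      gcongr

lemma energy_cases (hg : ∀ e ∈ wheelGraph5.edgeSet, g e = 1) (h0 : 0 ≤ lam) (h1 : lam ≤ 1)
    (P : Partition wheelGraph5 2) :
    (typeD P ∧ energy wheelGraph5 wheelMass g lam P = 5 * lam) ∨
    (typeM P ∧ energy wheelGraph5 wheelMass g lam P = 4 * lam + √2 * (1 - lam)) ∨
    (typeC P ∧ energy wheelGraph5 wheelMass g lam P = 3 * lam + 2 * (√2 * (1 - lam))) ∨
    3 * lam + 8 * (√2 * (1 - lam)) ≤ energy wheelGraph5 wheelMass g lam P := by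
  by_cases hD : typeD P
  · exact .inl ⟨hD, energy_of_typeD hg hD⟩
  by_cases hM : typeM P
  · exact .inr <| .inl ⟨hM, energy_of_typeM hg hM⟩
  by_cases hC : typeC P
  · exact .inr <| .inr <| .inl ⟨hC, energy_of_typeC hg hC⟩
  exact .inr <| .inr <| .inr <| le_energy_of_not_type hg h0 h1 hD hM hC

end WheelEnergies

lemma exists_typeD : ∃ P : Partition wheelGraph5 2, typeD P :=
  ⟨.ofCompl {4, 0} (by decide) (by decide), 0, .inl rfl⟩

lemma exists_typeC : ∃ P : Partition wheelGraph5 2, typeC P :=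
  ⟨.ofCompl {0} (by decide) (by decide), 0, .inl rfl⟩

section Regimes

variable {g : Sym2 (Fin 5) → ℝ} {lam : ℝ}

lemma forall_energy_le_iff_typeD (hg : ∀ e ∈ wheelGraph5.edgeSet, g e = 1) (h0 : 0 ≤ lam)
    (hlt : lam < 2 - √2) (P : Partition wheelGraph5 2) :
    (∀ Q : Partition wheelGraph5 2,
        energy wheelGraph5 wheelMass g lam P ≤ energy wheelGraph5 wheelMass g lam Q) ↔
      typeD P := by
  have h1 : lam ≤ 1 := by linarith [Real.one_lt_sqrt_two]
  have hgap : 0 < √2 * (1 - lam) - lam := by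
    rw [sqrt_two_mul_one_sub_sub_eq]
    exact mul_pos (by positivity) (by linarith)
  refine forall_le_iff_of_eq_of_lt exists_typeD (fun _ => energy_of_typeD hg) (fun Q hQ => ?_) P
  rcases energy_cases hg h0 h1 Q with ⟨hD, -⟩ | ⟨-, hE⟩ | ⟨-, hE⟩ | hE
  exacts [absurd hD hQ, by linarith, by linarith, by linarith]

lemma forall_energy_le_iff_typeC (hg : ∀ e ∈ wheelGraph5.edgeSet, g e = 1)
    (hgt : 2 - √2 < lam) (h1 : lam < 1) (P : Partition wheelGraph5 2) :
    (∀ Q : Partition wheelGraph5 2,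
        energy wheelGraph5 wheelMass g lam P ≤ energy wheelGraph5 wheelMass g lam Q) ↔
      typeC P := by
  have h0 : 0 ≤ lam := by linarith [Real.sqrt_two_lt_three_halves]
  have hgap : √2 * (1 - lam) - lam < 0 := by
    rw [sqrt_two_mul_one_sub_sub_eq]
    exact mul_neg_of_pos_of_neg (by positivity) (by linarith)
  have hpos : 0 < √2 * (1 - lam) := mul_pos (by positivity) (by linarith)
  refine forall_le_iff_of_eq_of_lt exists_typeC (fun _ => energy_of_typeC hg) (fun Q hQ => ?_) P
  rcases energy_cases hg h0 h1.le Q with ⟨-, hE⟩ | ⟨-, hE⟩ | ⟨hC, -⟩ | hE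
  exacts [by linarith, by linarith, absurd hC hQ, by linarith]

lemma energy_le_of_critical (hg : ∀ e ∈ wheelGraph5.edgeSet, g e = 1)
    {P : Partition wheelGraph5 2} (hP : typeD P ∨ typeM P ∨ typeC P)
    (Q : Partition wheelGraph5 2) :
    energy wheelGraph5 wheelMass g (2 - √2) P ≤ energy wheelGraph5 wheelMass g (2 - √2) Q := by
  have h0 : 0 ≤ 2 - √2 := by linarith [Real.sqrt_two_lt_three_halves]
  have h1 : 2 - √2 ≤ 1 := by linarith [Real.one_lt_sqrt_two]
  have hgap : √2 * (1 - (2 - √2)) - (2 - √2) = 0 := by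
    rw [sqrt_two_mul_one_sub_sub_eq]
    ring
  have hpos : 0 ≤ √2 * (1 - (2 - √2)) := mul_nonneg (by positivity) (by linarith)
  have hP' : energy wheelGraph5 wheelMass g (2 - √2) P = 5 * (2 - √2) := by
    rcases hP with hD | hM | hC
    · exact energy_of_typeD hg hD
    · rw [energy_of_typeM hg hM]
      linarith
    · rw [energy_of_typeC hg hC]
      linarith
  rw [hP']
  rcases energy_cases hg h0 h1 Q with ⟨-, hE⟩ | ⟨-, hE⟩ | ⟨-, hE⟩ | hE <;> linarith

end Regimes

/-- Example `+-vertex`, graph `Γ`: with vertex weights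
`f(a) = f(a') = 9`, `f(b) = f(b') = 1`, `f(c) = 2` and unit edge weights, the
minimal `2`-partitions are exactly those of type `D` for `λ ∈ [0, 2-√2)`, all of
types `D`, `M`, `C` at `λ = 2-√2`, and exactly those of type `C` for
`λ ∈ (2-√2, 1)`. -/
theorem wheel5_minimal_partitions
    (f : Fin 5 → ℝ) (hf₀ : f 0 = 9) (hf₁ : f 1 = 1) (hf₂ : f 2 = 9)
    (hf₃ : f 3 = 1) (hf₄ : f 4 = 2)
    (g : Sym2 (Fin 5) → ℝ) (hg : ∀ e ∈ wheelGraph5.edgeSet, g e = 1) :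
    (∀ lam : ℝ, 0 ≤ lam → lam < 2 - Real.sqrt 2 →
      ∀ P : Partition wheelGraph5 2,
        (∀ Q : Partition wheelGraph5 2,
            energy wheelGraph5 f g lam P ≤ energy wheelGraph5 f g lam Q) ↔
          typeD P) ∧
      (∀ P : Partition wheelGraph5 2, typeD P ∨ typeM P ∨ typeC P →
        ∀ Q : Partition wheelGraph5 2,
          energy wheelGraph5 f g (2 - Real.sqrt 2) P
            ≤ energy wheelGraph5 f g (2 - Real.sqrt 2) Q) ∧
      (∀ lam : ℝ, 2 - Real.sqrt 2 < lam → lam < 1 →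
        ∀ P : Partition wheelGraph5 2,
          (∀ Q : Partition wheelGraph5 2,
              energy wheelGraph5 f g lam P ≤ energy wheelGraph5 f g lam Q) ↔
            typeC P) := by
  obtain rfl : f = wheelMass := by
    funext v
    fin_cases v <;> simp [wheelMass, wheelWeight, *]
  exact ⟨fun _ h0 hlt => forall_energy_le_iff_typeD hg h0 hlt,
    fun _ hP => energy_le_of_critical hg hP,
    fun _ hgt hlt => forall_energy_le_iff_typeC hg hgt hlt⟩

end Districting
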